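/- Bound preservation of the minmod reconstruction: let θ ∈ [0,2], Δx > 0, α > 0, and ρ : ℤ → ℝ with 0 ≤ ρ_i ≤ α for all i. Define slopes (ρ_x)_i = minmod(θ(ρ_{i+1}−ρ_i)/Δx, (ρ_{i+1}−ρ_{i−1})/(2Δx), θ(ρ_i−ρ_{i−1})/Δx) and reconstructions ρ_i^E = ρ_i + (Δx/2)(ρ_x)_i, ρ_i^W = ρ_i − (Δx/2)(ρ_x)_i. Then 0 ≤ ρ_i^E ≤ α and 0 ≤ ρ_i^W ≤ α for all i; moreover, if ρ_{i−1} < ρ_i < ρ_{i+1}, then the chain ρ_{i−1} ≤ ρ_i^W ≤ ρ_i ≤ ρ_i^E ≤ ρ_{i+1} holds. -/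

import Mathlib

/-- The minmod limiter. -/
noncomputable def minmod (a b c : ℝ) : ℝ :=
  if 0 < a ∧ 0 < b ∧ 0 < c then min a (min b c)
  else if a < 0 ∧ b < 0 ∧ c < 0 then max a (max b c)
  else 0

/-- Minmod mmSlope `(ρ_x)_i`. -/
noncomputable def mmSlope (θ Δx : ℝ) (ρ : ℤ → ℝ) (i : ℤ) : ℝ :=
  minmod (θ * (ρ (i + 1) - ρ i) / Δx) ((ρ (i + 1) - ρ (i - 1)) / (2 * Δx))
    (θ * (ρ i - ρ (i - 1)) / Δx)

/-- East reconstruction `ρ_i^E`. -/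
noncomputable def recE (θ Δx : ℝ) (ρ : ℤ → ℝ) (i : ℤ) : ℝ :=
  ρ i + Δx / 2 * mmSlope θ Δx ρ i

/-- West reconstruction `ρ_i^W`. -/
noncomputable def recW (θ Δx : ℝ) (ρ : ℤ → ℝ) (i : ℤ) : ℝ :=
  ρ i - Δx / 2 * mmSlope θ Δx ρ i


lemma key (θ Δx : ℝ) (hθ₀ : 0 ≤ θ) (hθ₂ : θ ≤ 2) (hΔx : 0 < Δx)
    (ρ : ℤ → ℝ) (i : ℤ) :
    mmSlope θ Δx ρ i = 0 ∨
    (0 < mmSlope θ Δx ρ i ∧ Δx / 2 * mmSlope θ Δx ρ i ≤ ρ (i + 1) - ρ i ∧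
      Δx / 2 * mmSlope θ Δx ρ i ≤ ρ i - ρ (i - 1)) ∨
    (mmSlope θ Δx ρ i < 0 ∧ ρ (i + 1) - ρ i ≤ Δx / 2 * mmSlope θ Δx ρ i ∧
      ρ i - ρ (i - 1) ≤ Δx / 2 * mmSlope θ Δx ρ i) := by
  unfold mmSlope minmod
  set p := ρ (i + 1) - ρ i with hp
  set q := ρ i - ρ (i - 1) with hq
  split_ifs with h1 h2
  · right; left
    obtain ⟨ha, hb, hc⟩ := h1
    have hpa : 0 < θ * p := by
      rcases div_pos_iff.mp ha with ⟨h, _⟩ | ⟨_, h⟩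
      · exact h
      · linarith
    have hqa : 0 < θ * q := by
      rcases div_pos_iff.mp hc with ⟨h, _⟩ | ⟨_, h⟩
      · exact h
      · linarith
    have hp0 : 0 < p := by
      by_contra h; push_neg at h
      nlinarith [mul_nonpos_of_nonneg_of_nonpos hθ₀ h]
    have hq0 : 0 < q := by
      by_contra h; push_neg at h
      nlinarith [mul_nonpos_of_nonneg_of_nonpos hθ₀ h]
    refine ⟨lt_min ha (lt_min hb hc), ?_, ?_⟩
    · have h1 : min (θ * p / Δx) (min ((ρ (i+1) - ρ (i-1)) / (2 * Δx)) (θ * q / Δx))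
          ≤ θ * p / Δx := min_le_left _ _
      have h2 : Δx / 2 * (θ * p / Δx) = θ * p / 2 := by field_simp
      nlinarith [mul_le_mul_of_nonneg_left h1 (le_of_lt (by linarith : (0:ℝ) < Δx / 2))]
    · have h1 : min (θ * p / Δx) (min ((ρ (i+1) - ρ (i-1)) / (2 * Δx)) (θ * q / Δx))
          ≤ θ * q / Δx := le_trans (min_le_right _ _) (min_le_right _ _)
      have h2 : Δx / 2 * (θ * q / Δx) = θ * q / 2 := by field_simp
      nlinarith [mul_le_mul_of_nonneg_left h1 (le_of_lt (by linarith : (0:ℝ) < Δx / 2))]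
  · right; right
    obtain ⟨ha, hb, hc⟩ := h2
    have hpa : θ * p < 0 := by
      rcases div_neg_iff.mp ha with ⟨_, h⟩ | ⟨h, _⟩
      · linarith
      · exact h
    have hqa : θ * q < 0 := by
      rcases div_neg_iff.mp hc with ⟨_, h⟩ | ⟨h, _⟩
      · linarith
      · exact h
    have hp0 : p < 0 := by
      by_contra h; push_neg at h
      nlinarith [mul_nonneg hθ₀ h]
    have hq0 : q < 0 := by
      by_contra h; push_neg at h
      nlinarith [mul_nonneg hθ₀ h]
    refine ⟨max_lt ha (max_lt hb hc), ?_, ?_⟩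
    · have h1 : θ * p / Δx ≤
          max (θ * p / Δx) (max ((ρ (i+1) - ρ (i-1)) / (2 * Δx)) (θ * q / Δx)) :=
        le_max_left _ _
      have h2 : Δx / 2 * (θ * p / Δx) = θ * p / 2 := by field_simp
      nlinarith [mul_le_mul_of_nonneg_left h1 (le_of_lt (by linarith : (0:ℝ) < Δx / 2))]
    · have h1 : θ * q / Δx ≤
          max (θ * p / Δx) (max ((ρ (i+1) - ρ (i-1)) / (2 * Δx)) (θ * q / Δx)) :=
        le_trans (le_max_right _ _) (le_max_right _ _)
      have h2 : Δx / 2 * (θ * q / Δx) = θ * q / 2 := by field_simp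
      nlinarith [mul_le_mul_of_nonneg_left h1 (le_of_lt (by linarith : (0:ℝ) < Δx / 2))]
  · left; rfl

/-- Bound preservation of the minmod reconstruction, together with the monotonicity chain
`ρ_{i−1} ≤ ρ_i^W ≤ ρ_i ≤ ρ_i^E ≤ ρ_{i+1}` in the strictly increasing case. -/
theorem minmod_reconstruction_bounds
    (θ Δx α : ℝ) (hθ₀ : 0 ≤ θ) (hθ₂ : θ ≤ 2) (hΔx : 0 < Δx) (hα : 0 < α)
    (ρ : ℤ → ℝ) (hρ : ∀ i, 0 ≤ ρ i ∧ ρ i ≤ α) :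
    (∀ i, (0 ≤ recE θ Δx ρ i ∧ recE θ Δx ρ i ≤ α) ∧
      (0 ≤ recW θ Δx ρ i ∧ recW θ Δx ρ i ≤ α)) ∧
    (∀ i, ρ (i - 1) < ρ i → ρ i < ρ (i + 1) →
      ρ (i - 1) ≤ recW θ Δx ρ i ∧ recW θ Δx ρ i ≤ ρ i ∧
        ρ i ≤ recE θ Δx ρ i ∧ recE θ Δx ρ i ≤ ρ (i + 1)) := by
  have hhalf : (0:ℝ) < Δx / 2 := by linarith
  constructor
  · intro i
    obtain ⟨hi0, hi1⟩ := hρ i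
    obtain ⟨hm0, hm1⟩ := hρ (i - 1)
    obtain ⟨hp0, hp1⟩ := hρ (i + 1)
    rcases key θ Δx hθ₀ hθ₂ hΔx ρ i with h0 | ⟨hs, h1, h2⟩ | ⟨hs, h1, h2⟩
    · unfold recE recW; rw [h0]; norm_num
      and_intros <;> linarith
    · have hd : 0 ≤ Δx / 2 * mmSlope θ Δx ρ i := mul_nonneg hhalf.le hs.le
      unfold recE recW
      exact ⟨⟨by linarith, by linarith⟩, by linarith, by linarith⟩
    · have hd : Δx / 2 * mmSlope θ Δx ρ i ≤ 0 :=
        (mul_neg_of_pos_of_neg hhalf hs).le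
      unfold recE recW
      exact ⟨⟨by linarith, by linarith⟩, by linarith, by linarith⟩
  · intro i hlt1 hlt2
    rcases key θ Δx hθ₀ hθ₂ hΔx ρ i with h0 | ⟨hs, h1, h2⟩ | ⟨hs, h1, h2⟩
    · unfold recE recW; rw [h0]; norm_num
      and_intros <;> linarith
    · have hd : 0 ≤ Δx / 2 * mmSlope θ Δx ρ i := mul_nonneg hhalf.le hs.le
      unfold recE recW
      exact ⟨by linarith, by linarith, by linarith, by linarith⟩
    · have hd : Δx / 2 * mmSlope θ Δx ρ i ≤ 0 :=
        (mul_neg_of_pos_of_neg hhalf hs).le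
      linarith
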